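/- arXiv:2002.08410 — 4 statements merged into one kernel-verified Lean document; each statement's English description precedes it below -/
import Mathlib

section
/- For the entropic regularized transportation problem with only the first marginal constraint, the optimal plan has a closed form: for λ > 0, cost matrix c ∈ ℝ_{≥0}^{N×M}, and weights w ∈ ℝ_{≥0}^N with ∑_n w_n = 1, the minimizer of π ↦ ∑_{n,m} π_{nm} c_{nm} - λ ∑_{n,m} π_{nm}(1 - log π_{nm}) over all π ∈ ℝ_{>0}^{N×M} satisfying ∑_m π_{nm} = w_n for each n is given by π_{nm} = w_n · exp(-c_{nm}/λ) / ∑_{m'} exp(-c_{nm'}/λ). -/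
open Finset

lemma aux_xlogx (x y : ℝ) (hx : 0 < x) (hy : 0 < y) :
    x * Real.log y + (x - y) ≤ x * Real.log x := by
  have h := Real.log_le_sub_one_of_pos (div_pos hy hx)
  rw [Real.log_div hy.ne' hx.ne'] at h
  have h2 := mul_le_mul_of_nonneg_left h hx.le
  have h3 : x * (y / x) = y := by field_simp
  nlinarith [h2]

/-- closed form of the optimal entropic-regularized transportation plan
with only the first marginal constraint. -/
theorem stmt_0 (N M : ℕ) (hN : 0 < N) (hM : 0 < M)
    (c : Fin N → Fin M → ℝ) (hc : ∀ n m, 0 ≤ c n m)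
    (w : Fin N → ℝ) (hw : ∀ n, 0 < w n) (hwsum : ∑ n, w n = 1)
    (lam : ℝ) (hlam : 0 < lam)
    (πstar : Fin N → Fin M → ℝ)
    (hπstar : ∀ n m, πstar n m
      = w n * Real.exp (-(c n m) / lam) / ∑ m', Real.exp (-(c n m') / lam)) :
    (∀ n m, 0 < πstar n m) ∧ (∀ n, ∑ m, πstar n m = w n) ∧
    ∀ π : Fin N → Fin M → ℝ, (∀ n m, 0 < π n m) → (∀ n, ∑ m, π n m = w n) →
      (∑ n, ∑ m, πstar n m * c n m)
        - lam * (-(∑ n, ∑ m, πstar n m * (Real.log (πstar n m) - 1)))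
      ≤ (∑ n, ∑ m, π n m * c n m)
        - lam * (-(∑ n, ∑ m, π n m * (Real.log (π n m) - 1))) := by
  have hMne : Nonempty (Fin M) := ⟨⟨0, hM⟩⟩
  set k : Fin N → Fin M → ℝ := fun n m => Real.exp (-(c n m) / lam) with hk
  have hkpos : ∀ n m, 0 < k n m := fun n m => Real.exp_pos _
  set K : Fin N → ℝ := fun n => ∑ m', k n m' with hKdef
  have hKpos : ∀ n, 0 < K n :=
    fun n => Finset.sum_pos (fun m _ => hkpos n m) Finset.univ_nonempty
  have hπstar' : ∀ n m, πstar n m = w n * k n m / K n := by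
    intro n m; rw [hπstar]
  have hpos : ∀ n m, 0 < πstar n m := by
    intro n m
    rw [hπstar' n m]
    exact div_pos (mul_pos (hw n) (hkpos n m)) (hKpos n)
  have hmarg : ∀ n, ∑ m, πstar n m = w n := by
    intro n
    have : ∑ m, πstar n m = (w n * ∑ m, k n m) / K n := by
      rw [Finset.mul_sum, Finset.sum_div]
      exact Finset.sum_congr rfl fun m _ => hπstar' n m
    rw [this]
    have : ∑ m, k n m = K n := rfl
    rw [this, mul_div_assoc, div_self (hKpos n).ne', mul_one]
  refine ⟨hpos, hmarg, ?_⟩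
  intro π hπpos hπmarg
  have hlog : ∀ n m, Real.log (πstar n m) = Real.log (w n / K n) + (-(c n m) / lam) := by
    intro n m
    rw [hπstar' n m, show w n * k n m / K n = (w n / K n) * k n m by ring,
      Real.log_mul (div_pos (hw n) (hKpos n)).ne' (hkpos n m).ne']
    congr 1
    exact Real.log_exp _
  have rearr : ∀ p : Fin N → Fin M → ℝ,
      (∑ n, ∑ m, p n m * c n m)
        - lam * (-(∑ n, ∑ m, p n m * (Real.log (p n m) - 1)))
      = ∑ n, ∑ m, (p n m * c n m + lam * (p n m * (Real.log (p n m) - 1))) := by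
    intro p
    rw [mul_neg, sub_neg_eq_add, Finset.mul_sum, ← Finset.sum_add_distrib]
    refine Finset.sum_congr rfl fun n _ => ?_
    rw [Finset.mul_sum, ← Finset.sum_add_distrib]
  rw [rearr πstar, rearr π]
  refine Finset.sum_le_sum fun n _ => ?_
  set a : ℝ := Real.log (w n / K n) with ha
  have hzero : ∑ m, (π n m - πstar n m) = 0 := by
    rw [Finset.sum_sub_distrib, hπmarg n, hmarg n, sub_self]
  have key : ∀ m, πstar n m * c n m + lam * (πstar n m * (Real.log (πstar n m) - 1))
      + lam * a * (π n m - πstar n m)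
      ≤ π n m * c n m + lam * (π n m * (Real.log (π n m) - 1)) := by
    intro m
    have h1 := aux_xlogx (π n m) (πstar n m) (hπpos n m) (hpos n m)
    rw [hlog n m] at h1 ⊢
    set d : ℝ := -(c n m) / lam with hd
    have hcd : c n m = -(lam * d) := by
      rw [hd]; field_simp
    rw [hcd]
    have h2 := mul_le_mul_of_nonneg_left h1 hlam.le
    nlinarith [h2]
  calc ∑ m, (πstar n m * c n m + lam * (πstar n m * (Real.log (πstar n m) - 1)))
      = ∑ m, (πstar n m * c n m + lam * (πstar n m * (Real.log (πstar n m) - 1))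
          + lam * a * (π n m - πstar n m)) := by
        conv_rhs => rw [Finset.sum_add_distrib, ← Finset.mul_sum, hzero, mul_zero, add_zero]
    _ ≤ ∑ m, (π n m * c n m + lam * (π n m * (Real.log (π n m) - 1))) :=
        Finset.sum_le_sum fun m _ => key m
end

section
/- The Integral Squared Error between two univariate Gaussian mixtures has the closed form D_ISE(p, q) = wᵀ S_OO w - 2 wᵀ S_OR v + vᵀ S_RR v, where p = ∑_{n=1}^N w_n φ(·|μ_n, σ_n²), q = ∑_{m=1}^M v_m φ(·|ν_m, τ_m²), (S_OO)_{nn'} = φ(μ_n | μ_{n'}, σ_n² + σ_{n'}²), (S_OR)_{nm} = φ(μ_n | ν_m, σ_n² + τ_m²), and (S_RR)_{mm'} = φ(ν_m | ν_{m'}, τ_m² + τ_{m'}²). -/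
open MeasureTheory Finset

/-- The univariate Gaussian density with mean `m` and variance `v`. -/
noncomputable def gpdf (m v x : ℝ) : ℝ :=
  (Real.sqrt (2 * Real.pi * v))⁻¹ * Real.exp (-(x - m) ^ 2 / (2 * v))

/-!
Completing the square, `φ(x | a, u) φ(x | b, v)` is `φ(a | b, u + v)` times a Gaussian density
in `x`, so it integrates to `φ(a | b, u + v)`.
Expanding `(p - q)²` into `p p - 2 p q + q q` and integrating each product of mixtures term by
term gives the three quadratic forms.
-/

lemma gpdf_eq_gaussianPDFReal (m v : ℝ) (hv : 0 ≤ v) :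
    gpdf m v = ProbabilityTheory.gaussianPDFReal m ⟨v, hv⟩ := by
  funext x
  simp only [gpdf, neg_div, ProbabilityTheory.gaussianPDFReal]
  rfl

lemma integrable_gpdf (m : ℝ) {v : ℝ} (hv : 0 < v) : Integrable (gpdf m v) := by
  rw [gpdf_eq_gaussianPDFReal m v hv.le]
  exact ProbabilityTheory.integrable_gaussianPDFReal m _

lemma integral_gpdf (m : ℝ) {v : ℝ} (hv : 0 < v) : ∫ x, gpdf m v x = 1 := by
  rw [gpdf_eq_gaussianPDFReal m v hv.le]
  exact ProbabilityTheory.integral_gaussianPDFReal_eq_one m fun h => hv.ne' congr(NNReal.toReal $h)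

lemma gpdf_mul_gpdf (a b : ℝ) {u v : ℝ} (hu : 0 < u) (hv : 0 < v) (x : ℝ) :
    gpdf a u x * gpdf b v x =
      gpdf b (u + v) a * gpdf ((a * v + b * u) / (u + v)) (u * v / (u + v)) x := by
  simp only [gpdf]
  rw [mul_mul_mul_comm, mul_mul_mul_comm _ (Real.exp _), ← Real.exp_add, ← Real.exp_add]
  congr 1
  · rw [← mul_inv, ← mul_inv, ← Real.sqrt_mul (by positivity), ← Real.sqrt_mul (by positivity)]
    congr 1
    field_simp
  · rw [Real.exp_eq_exp]
    field_simp
    ring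

section Product

variable (a b : ℝ) {u v : ℝ} (hu : 0 < u) (hv : 0 < v)
include hu hv

lemma integrable_gpdf_mul_gpdf : Integrable fun x => gpdf a u x * gpdf b v x := by
  simp_rw [gpdf_mul_gpdf a b hu hv]
  exact (integrable_gpdf _ (by positivity)).const_mul _

lemma integral_gpdf_mul_gpdf : ∫ x, gpdf a u x * gpdf b v x = gpdf b (u + v) a := by
  simp_rw [gpdf_mul_gpdf a b hu hv]
  rw [integral_const_mul, integral_gpdf _ (by positivity), mul_one]

end Product

section Mixture

variable {ι κ : Type*} [Fintype ι] [Fintype κ] (c a u : ι → ℝ) (d b v : κ → ℝ)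

lemma gaussMixture_mul_gaussMixture (x : ℝ) :
    (∑ i, c i * gpdf (a i) (u i) x) * ∑ j, d j * gpdf (b j) (v j) x
      = ∑ i, ∑ j, c i * d j * (gpdf (a i) (u i) x * gpdf (b j) (v j) x) := by
  rw [sum_mul_sum]
  exact sum_congr rfl fun i _ => sum_congr rfl fun j _ => by ring

variable {u v} (hu : ∀ i, 0 < u i) (hv : ∀ j, 0 < v j)
include hu hv

lemma integrable_gaussMixture_mul_gaussMixture :
    Integrable fun x => (∑ i, c i * gpdf (a i) (u i) x) * ∑ j, d j * gpdf (b j) (v j) x := by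
  simp_rw [gaussMixture_mul_gaussMixture]
  exact integrable_finsetSum _ fun i _ => integrable_finsetSum _ fun j _ =>
    (integrable_gpdf_mul_gpdf _ _ (hu i) (hv j)).const_mul _

lemma integral_gaussMixture_mul_gaussMixture :
    (∫ x, (∑ i, c i * gpdf (a i) (u i) x) * ∑ j, d j * gpdf (b j) (v j) x)
      = ∑ i, ∑ j, c i * gpdf (b j) (u i + v j) (a i) * d j := by
  have hint (i : ι) (j : κ) :
      Integrable fun x => c i * d j * (gpdf (a i) (u i) x * gpdf (b j) (v j) x) :=
    (integrable_gpdf_mul_gpdf _ _ (hu i) (hv j)).const_mul _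
  simp_rw [gaussMixture_mul_gaussMixture]
  rw [integral_finsetSum _ fun i _ => integrable_finsetSum _ fun j _ => hint i j]
  refine sum_congr rfl fun i _ => ?_
  rw [integral_finsetSum _ fun j _ => hint i j]
  refine sum_congr rfl fun j _ => ?_
  rw [integral_const_mul, integral_gpdf_mul_gpdf _ _ (hu i) (hv j)]
  ring

end Mixture

/-- closed form of the ISE between two univariate Gaussian mixtures:
`D_ISE(p,q) = wᵀ S_OO w - 2 wᵀ S_OR v + vᵀ S_RR v`. -/
theorem stmt_9 (N M : ℕ)
    (w : Fin N → ℝ) (μ : Fin N → ℝ) (s : Fin N → ℝ) (hs : ∀ n, 0 < s n)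
    (v : Fin M → ℝ) (ν : Fin M → ℝ) (t : Fin M → ℝ) (ht : ∀ m, 0 < t m) :
    (∫ x : ℝ, ((∑ n, w n * gpdf (μ n) (s n) x) - ∑ m, v m * gpdf (ν m) (t m) x) ^ 2)
      = (∑ n, ∑ n', w n * gpdf (μ n') (s n + s n') (μ n) * w n')
        - 2 * (∑ n, ∑ m, w n * gpdf (ν m) (s n + t m) (μ n) * v m)
        + ∑ m, ∑ m', v m * gpdf (ν m') (t m + t m') (ν m) * v m' := by
  set p := fun x => ∑ n, w n * gpdf (μ n) (s n) x
  set q := fun x => ∑ m, v m * gpdf (ν m) (t m) x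
  have hpp : Integrable fun x => p x * p x :=
    integrable_gaussMixture_mul_gaussMixture w μ w μ hs hs
  have hpq : Integrable fun x => p x * q x :=
    integrable_gaussMixture_mul_gaussMixture w μ v ν hs ht
  have hqq : Integrable fun x => q x * q x :=
    integrable_gaussMixture_mul_gaussMixture v ν v ν ht ht
  have h2pq : Integrable fun x => 2 * (p x * q x) := hpq.const_mul 2
  calc (∫ x, (p x - q x) ^ 2)
      = ∫ x, (p x * p x - 2 * (p x * q x)) + q x * q x := by congr 1; funext x; ring
    _ = (∫ x, p x * p x) - 2 * (∫ x, p x * q x) + ∫ x, q x * q x := by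
        rw [integral_add (f := fun x => p x * p x - 2 * (p x * q x)) (hpp.sub h2pq) hqq,
          integral_sub hpp h2pq, integral_const_mul]
    _ = _ := by
        rw [integral_gaussMixture_mul_gaussMixture w μ w μ hs hs,
          integral_gaussMixture_mul_gaussMixture w μ v ν hs ht,
          integral_gaussMixture_mul_gaussMixture v ν v ν ht ht]
end

section
/- The Cauchy–Schwarz divergence is not jointly convex: there exist univariate Gaussian densities f₁, f₂, g₁, g₂ and α = 1/2 such that D_CS(α f₁ + (1-α) f₂, α g₁ + (1-α) g₂) > α D_CS(f₁, g₁) + (1-α) D_CS(f₂, g₂). -/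
open MeasureTheory

lemma gpdf_mul (a b : ℝ) (ha : 0 < a) (hb : 0 < b) :
    (fun x => gpdf 0 a x * gpdf 0 b x)
      = fun x => ((Real.sqrt (2*Real.pi*a))⁻¹ * (Real.sqrt (2*Real.pi*b))⁻¹)
        * Real.exp (-((a+b)/(2*a*b)) * x^2) := by
  funext x
  unfold gpdf
  rw [mul_mul_mul_comm, ← Real.exp_add]
  congr 1
  field_simp
  ring

lemma integrable_gpdf_mul (a b : ℝ) (ha : 0 < a) (hb : 0 < b) :
    Integrable (fun x => gpdf 0 a x * gpdf 0 b x) := by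
  rw [gpdf_mul a b ha hb]
  exact (integrable_exp_neg_mul_sq (by positivity)).const_mul _

lemma integral_gpdf_mul (a b : ℝ) (ha : 0 < a) (hb : 0 < b) :
    ∫ x : ℝ, gpdf 0 a x * gpdf 0 b x
      = (Real.sqrt (2*Real.pi))⁻¹ * (Real.sqrt (a+b))⁻¹ := by
  have hπ := Real.pi_pos
  rw [gpdf_mul a b ha hb, MeasureTheory.integral_const_mul _ _, integral_gaussian]
  rw [show Real.pi / ((a+b)/(2*a*b)) = (2*Real.pi*a) * ((2*Real.pi*b) / ((2*Real.pi)*(a+b))) by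
    field_simp]
  rw [Real.sqrt_mul (by positivity : (0:ℝ) ≤ 2*Real.pi*a) (2*Real.pi*b / (2*Real.pi*(a+b))),
    Real.sqrt_div (by positivity : (0:ℝ) ≤ 2*Real.pi*b) (2*Real.pi*(a+b)),
    Real.sqrt_mul (by positivity : (0:ℝ) ≤ 2*Real.pi) (a+b)]
  have h1 : Real.sqrt (2*Real.pi*a) ≠ 0 := by positivity
  have h2 : Real.sqrt (2*Real.pi*b) ≠ 0 := by positivity
  have h3 : Real.sqrt (2*Real.pi) ≠ 0 := by positivity
  have h4 : Real.sqrt (a+b) ≠ 0 := by positivity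
  field_simp

lemma integral_mix (u v w z : ℝ → ℝ)
    (huw : Integrable (fun x => u x * w x)) (huz : Integrable (fun x => u x * z x))
    (hvw : Integrable (fun x => v x * w x)) (hvz : Integrable (fun x => v x * z x)) :
    ∫ x : ℝ, ((1/2)*u x + (1/2)*v x) * ((1/2)*w x + (1/2)*z x)
      = (1/4)*(∫ x : ℝ, u x * w x) + (1/4)*(∫ x : ℝ, u x * z x)
        + (1/4)*(∫ x : ℝ, v x * w x) + (1/4)*(∫ x : ℝ, v x * z x) := by
  have h : (fun x => ((1/2)*u x + (1/2)*v x) * ((1/2)*w x + (1/2)*z x))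
      = fun x => ((1/4)*(u x * w x) + (1/4)*(u x * z x))
        + ((1/4)*(v x * w x) + (1/4)*(v x * z x)) := by
    funext x; ring
  have h1 : Integrable (fun x => (1/4:ℝ)*(u x*w x) + (1/4:ℝ)*(u x*z x)) :=
    (huw.const_mul _).add (huz.const_mul _)
  have h2 : Integrable (fun x => (1/4:ℝ)*(v x*w x) + (1/4:ℝ)*(v x*z x)) :=
    (hvw.const_mul _).add (hvz.const_mul _)
  rw [h, integral_add h1 h2,
    integral_add (huw.const_mul _) (huz.const_mul _),
    integral_add (hvw.const_mul _) (hvz.const_mul _),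
    MeasureTheory.integral_const_mul, MeasureTheory.integral_const_mul,
    MeasureTheory.integral_const_mul, MeasureTheory.integral_const_mul]
  ring

lemma integral_sq_mix (u v : ℝ → ℝ)
    (huu : Integrable (fun x => u x * u x)) (huv : Integrable (fun x => u x * v x))
    (hvv : Integrable (fun x => v x * v x)) :
    ∫ x : ℝ, ((1/2)*u x + (1/2)*v x)^2
      = (1/4)*(∫ x : ℝ, u x * u x) + (1/2)*(∫ x : ℝ, u x * v x)
        + (1/4)*(∫ x : ℝ, v x * v x) := by
  have h : (fun x => ((1/2)*u x + (1/2)*v x)^2)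
      = fun x => ((1/4)*(u x * u x) + (1/2)*(u x * v x)) + (1/4)*(v x * v x) := by
    funext x; ring
  have h1 : Integrable (fun x => (1/4:ℝ)*(u x*u x) + (1/2:ℝ)*(u x*v x)) :=
    (huu.const_mul _).add (huv.const_mul _)
  rw [h, integral_add h1 (hvv.const_mul _),
    integral_add (huu.const_mul _) (huv.const_mul _),
    MeasureTheory.integral_const_mul, MeasureTheory.integral_const_mul,
    MeasureTheory.integral_const_mul]

lemma integral_gpdf_sq (a : ℝ) (ha : 0 < a) :
    ∫ x : ℝ, (gpdf 0 a x)^2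
      = (Real.sqrt (2*Real.pi))⁻¹ * (Real.sqrt (a+a))⁻¹ := by
  have h : (fun x => (gpdf 0 a x)^2) = fun x => gpdf 0 a x * gpdf 0 a x := by
    funext x; ring
  rw [h, integral_gpdf_mul a a ha ha]

/-- The Cauchy–Schwarz divergence between two densities on ℝ. -/
noncomputable def DCS (p q : ℝ → ℝ) : ℝ :=
  -Real.log (∫ x : ℝ, p x * q x) + (1 / 2) * Real.log (∫ x : ℝ, (p x) ^ 2)
    + (1 / 2) * Real.log (∫ x : ℝ, (q x) ^ 2)

/-- the Cauchy–Schwarz divergence is not jointly convex: there are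
Gaussian densities `f₁, f₂, g₁, g₂` and `α = 1/2` violating the convexity
inequality. -/
theorem stmt_12 :
    ∃ f₁ f₂ g₁ g₂ : ℝ → ℝ,
      (∃ m v : ℝ, 0 < v ∧ f₁ = gpdf m v) ∧
      (∃ m v : ℝ, 0 < v ∧ f₂ = gpdf m v) ∧
      (∃ m v : ℝ, 0 < v ∧ g₁ = gpdf m v) ∧
      (∃ m v : ℝ, 0 < v ∧ g₂ = gpdf m v) ∧
      DCS (fun x => (1 / 2) * f₁ x + (1 / 2) * f₂ x)
          (fun x => (1 / 2) * g₁ x + (1 / 2) * g₂ x)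
        > (1 / 2) * DCS f₁ g₁ + (1 / 2) * DCS f₂ g₂ := by
  refine ⟨gpdf 0 1, gpdf 0 8, gpdf 0 (1/100), gpdf 0 8,
    ⟨0, 1, by norm_num, rfl⟩, ⟨0, 8, by norm_num, rfl⟩,
    ⟨0, 1/100, by norm_num, rfl⟩, ⟨0, 8, by norm_num, rfl⟩, ?_⟩
  have h1 : (0:ℝ) < 1 := by norm_num
  have h8 : (0:ℝ) < 8 := by norm_num
  have hh : (0:ℝ) < 1/100 := by norm_num
  have s9 : Real.sqrt 9 = 3 := by
    rw [show (9:ℝ) = 3^2 by norm_num, Real.sqrt_sq (by norm_num : (0:ℝ) ≤ 3)]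
  have s16 : Real.sqrt 16 = 4 := by
    rw [show (16:ℝ) = 4^2 by norm_num, Real.sqrt_sq (by norm_num : (0:ℝ) ≤ 4)]
  set c : ℝ := (Real.sqrt (2*Real.pi))⁻¹ with hcdef
  have hc : 0 < c := by positivity
  have hc2 : (Real.sqrt Real.pi)⁻¹ * (Real.sqrt 2)⁻¹ = c := by
    rw [hcdef, Real.sqrt_mul (by norm_num : (0:ℝ) ≤ 2), mul_inv, mul_comm]
  -- specific integrals
  have I11 : ∫ x : ℝ, gpdf 0 1 x * gpdf 0 (1/100) x = c * (Real.sqrt (101/100))⁻¹ := by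
    rw [integral_gpdf_mul 1 (1/100) h1 hh]; norm_num
    exact hc2
  have I12 : ∫ x : ℝ, gpdf 0 1 x * gpdf 0 8 x = c * (3:ℝ)⁻¹ := by
    rw [integral_gpdf_mul 1 8 h1 h8]; norm_num [s9]
    exact hc2
  have I21 : ∫ x : ℝ, gpdf 0 8 x * gpdf 0 (1/100) x = c * (Real.sqrt (801/100))⁻¹ := by
    rw [integral_gpdf_mul 8 (1/100) h8 hh]; norm_num
    exact hc2
  have I21' : ∫ x : ℝ, gpdf 0 (1/100) x * gpdf 0 8 x = c * (Real.sqrt (801/100))⁻¹ := by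
    rw [integral_gpdf_mul (1/100) 8 hh h8]; norm_num
    exact hc2
  have I22 : ∫ x : ℝ, gpdf 0 8 x * gpdf 0 8 x = c * (4:ℝ)⁻¹ := by
    rw [integral_gpdf_mul 8 8 h8 h8]; norm_num [s16]
    exact hc2
  have Sq1 : ∫ x : ℝ, gpdf 0 1 x * gpdf 0 1 x = c * (Real.sqrt 2)⁻¹ := by
    rw [integral_gpdf_mul 1 1 h1 h1]; norm_num
    exact hc2
  have Sqg : ∫ x : ℝ, gpdf 0 (1/100) x * gpdf 0 (1/100) x = c * (Real.sqrt (1/50))⁻¹ := by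
    rw [integral_gpdf_mul (1/100) (1/100) hh hh]; norm_num
    exact hc2
  have int11 := integrable_gpdf_mul 1 (1/100) h1 hh
  have int12 := integrable_gpdf_mul 1 8 h1 h8
  have int21 := integrable_gpdf_mul 8 (1/100) h8 hh
  have int22 := integrable_gpdf_mul 8 8 h8 h8
  have int11' := integrable_gpdf_mul 1 1 h1 h1
  have intgg := integrable_gpdf_mul (1/100) (1/100) hh hh
  have intg8 := integrable_gpdf_mul (1/100) 8 hh h8
  have Ipq : ∫ x : ℝ, ((1/2) * gpdf 0 1 x + (1/2) * gpdf 0 8 x)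
        * ((1/2) * gpdf 0 (1/100) x + (1/2) * gpdf 0 8 x)
      = c * (((Real.sqrt (101/100))⁻¹ + 3⁻¹ + ((Real.sqrt (801/100))⁻¹ + 4⁻¹))/4) := by
    rw [integral_mix _ _ _ _ int11 int12 int21 int22, I11, I12, I21, I22]; ring
  have Ipp : ∫ x : ℝ, ((1/2) * gpdf 0 1 x + (1/2) * gpdf 0 8 x)^2
      = c * (((Real.sqrt 2)⁻¹ + (2*3⁻¹ + 4⁻¹))/4) := by
    rw [integral_sq_mix _ _ int11' int12 int22, Sq1, I12, I22]; ring
  have Iqq : ∫ x : ℝ, ((1/2) * gpdf 0 (1/100) x + (1/2) * gpdf 0 8 x)^2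
      = c * (((Real.sqrt (1/50))⁻¹ + (2*(Real.sqrt (801/100))⁻¹ + 4⁻¹))/4) := by
    rw [integral_sq_mix _ _ intgg intg8 int22, Sqg, I21', I22]; ring
  have Sq1' : ∫ x : ℝ, (gpdf 0 1 x)^2 = c * (Real.sqrt 2)⁻¹ := by
    simp only [pow_two]; exact Sq1
  have Sqg' : ∫ x : ℝ, (gpdf 0 (1/100) x)^2 = c * (Real.sqrt (1/50))⁻¹ := by
    simp only [pow_two]; exact Sqg
  have Sq8' : ∫ x : ℝ, (gpdf 0 8 x)^2 = c * (4:ℝ)⁻¹ := by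
    simp only [pow_two]; exact I22
  simp only [DCS]
  rw [Ipq, Ipp, Iqq, I11, I22, Sq1', Sqg', Sq8']
  set Mpq : ℝ := ((Real.sqrt (101/100))⁻¹ + 3⁻¹ + ((Real.sqrt (801/100))⁻¹ + 4⁻¹))/4 with hMpq
  set Mpp : ℝ := ((Real.sqrt 2)⁻¹ + (2*3⁻¹ + 4⁻¹))/4 with hMpp
  set Mqq : ℝ := ((Real.sqrt (1/50))⁻¹ + (2*(Real.sqrt (801/100))⁻¹ + 4⁻¹))/4 with hMqq
  have hMpq0 : 0 < Mpq := by rw [hMpq]; positivity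
  have hMpp0 : 0 < Mpp := by rw [hMpp]; positivity
  have hMqq0 : 0 < Mqq := by rw [hMqq]; positivity
  have hlog : ∀ M : ℝ, 0 < M → Real.log (c*M) = Real.log c + Real.log M :=
    fun M hM => Real.log_mul (ne_of_gt hc) (ne_of_gt hM)
  have ls : ∀ s : ℝ, 0 < s → Real.log (Real.sqrt s)⁻¹ = -(Real.log s/2) := by
    intro s hs; rw [Real.log_inv, Real.log_sqrt hs.le]
  rw [hlog _ hMpq0, hlog _ hMpp0, hlog _ hMqq0,
    hlog _ (by positivity : (0:ℝ) < (Real.sqrt (101/100))⁻¹),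
    hlog _ (by positivity : (0:ℝ) < (Real.sqrt 2)⁻¹),
    hlog _ (by positivity : (0:ℝ) < (Real.sqrt (1/50))⁻¹),
    hlog _ (by norm_num : (0:ℝ) < (4:ℝ)⁻¹),
    ls _ (by norm_num : (0:ℝ) < 101/100),
    ls _ (by norm_num : (0:ℝ) < 2),
    ls _ (by norm_num : (0:ℝ) < 1/50)]
  -- numeric bounds
  have bx1 : (Real.sqrt (101/100))⁻¹ < 1 :=
    inv_lt_one_of_one_lt₀ ((Real.lt_sqrt (by norm_num)).mpr (by norm_num))
  have bx3u : (Real.sqrt (801/100))⁻¹ < ((283:ℝ)/100)⁻¹ :=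
    inv_strictAnti₀ (by norm_num) ((Real.lt_sqrt (by norm_num)).mpr (by norm_num))
  have bx3l : ((20:ℝ)/7)⁻¹ < (Real.sqrt (801/100))⁻¹ :=
    inv_strictAnti₀ (by positivity) ((Real.sqrt_lt' (by norm_num)).mpr (by norm_num))
  have br2 : ((10:ℝ)/7)⁻¹ < (Real.sqrt 2)⁻¹ :=
    inv_strictAnti₀ (by positivity) ((Real.sqrt_lt' (by norm_num)).mpr (by norm_num))
  have bx50 : ((100:ℝ)/707)⁻¹ < (Real.sqrt (1/50))⁻¹ :=
    inv_strictAnti₀ (by positivity) ((Real.sqrt_lt' (by norm_num)).mpr (by norm_num))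
  have u1 : Mpq < 97/200 := by
    rw [hMpq]
    have e : ((283:ℝ)/100)⁻¹ = 100/283 := by norm_num
    rw [e] at bx3u
    linarith
  have u2 : 2/5 < Mpp := by
    rw [hMpp]
    have e : ((10:ℝ)/7)⁻¹ = 7/10 := by norm_num
    rw [e] at br2
    linarith
  have u3 : 79/40 < Mqq := by
    rw [hMqq]
    have e : ((100:ℝ)/707)⁻¹ = 707/100 := by norm_num
    have e' : ((20:ℝ)/7)⁻¹ = 7/20 := by norm_num
    rw [e] at bx50; rw [e'] at bx3l
    linarith
  have hnum : Mpq^8 * ((101:ℝ)/100)^2 < Mpp^4 * Mqq^4 * (2*(1/50)) := by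
    calc Mpq^8 * ((101:ℝ)/100)^2 ≤ (97/200)^8 * ((101:ℝ)/100)^2 := by
          gcongr
      _ < (2/5)^4 * (79/40)^4 * (2*(1/50)) := by norm_num
      _ ≤ Mpp^4 * Mqq^4 * (2*(1/50)) := by
          gcongr
  have hlt := Real.log_lt_log (by positivity) hnum
  have e1 : Real.log (Mpq^8 * ((101:ℝ)/100)^2)
      = 8*Real.log Mpq + 2*Real.log (101/100) := by
    rw [Real.log_mul (by positivity) (by norm_num), Real.log_pow, Real.log_pow]
    push_cast; ring
  have e2 : Real.log (Mpp^4 * Mqq^4 * (2*(1/50):ℝ))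
      = 4*Real.log Mpp + 4*Real.log Mqq + (Real.log 2 + Real.log (1/50)) := by
    rw [Real.log_mul (by positivity) (by norm_num),
      Real.log_mul (by positivity) (by positivity), Real.log_pow, Real.log_pow,
      Real.log_mul (by norm_num) (by norm_num)]
    push_cast; ring
  rw [e1, e2] at hlt
  linarith
end

section
/- The ISE between two exponential family densities has the closed form D_ISE(f(·|θ₁), f(·|θ₂)) = ∑_{i=1,2} [A(2θ_i)/A(θ_i)²]·E_{2θ_i}[h(X)] - 2·[A(θ₁+θ₂)/(A(θ₁)A(θ₂))]·E_{θ₁+θ₂}[h(X)], provided 2θ₁, 2θ₂, θ₁+θ₂ lie in the natural parameter space. -/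
open MeasureTheory

/-! The product of two exponential-family densities is again, up to the constant
`A(θ₁+θ₂)/(A(θ₁)A(θ₂))`, the density at `θ₁+θ₂` weighted by `h`, because the exponent is linear
in `θ`. Expanding `(f₁ - f₂)² = f₁² + f₂² - 2 f₁ f₂` and integrating each term this way gives the
closed form, with `θ + θ = 2 • θ` for the squares. -/

theorem integral_sub_sq {α : Type*} [MeasurableSpace α] {μ : Measure α} {u v : α → ℝ}
    (hu : Integrable (fun x => u x * u x) μ) (hv : Integrable (fun x => v x * v x) μ)
    (huv : Integrable (fun x => u x * v x) μ) :
    ∫ x, (u x - v x) ^ 2 ∂μ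
      = ∫ x, u x * u x ∂μ + ∫ x, v x * v x ∂μ - 2 * ∫ x, u x * v x ∂μ := by
  have hexpand : (fun x => (u x - v x) ^ 2)
      = fun x => u x * u x + v x * v x - 2 * (u x * v x) := by
    funext x; ring
  have hsum : Integrable (fun x => u x * u x + v x * v x) μ := hu.add hv
  rw [hexpand, integral_sub hsum (huv.const_mul 2), integral_add hu hv, integral_const_mul]

section ExpFamily

variable {α ι : Type*} [Fintype ι]
  {T : α → ι → ℝ} {h : α → ℝ} {A : (ι → ℝ) → ℝ} {f : (ι → ℝ) → α → ℝ}

open Matrix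

theorem density_mul_density
    (hf : ∀ θ x, f θ x = h x * Real.exp (θ ⬝ᵥ T x) / A θ) (θ θ' : ι → ℝ) (x : α) :
    f θ x * f θ' x = (A θ * A θ')⁻¹ * (h x ^ 2 * Real.exp ((θ + θ') ⬝ᵥ T x)) := by
  rw [hf, hf, add_dotProduct, Real.exp_add]
  field_simp

theorem integral_mul_density [MeasurableSpace α] {μ : Measure α}
    (hf : ∀ θ x, f θ x = h x * Real.exp (θ ⬝ᵥ T x) / A θ) (θ : ι → ℝ) :
    ∫ x, h x * f θ x ∂μ = (A θ)⁻¹ * ∫ x, h x ^ 2 * Real.exp (θ ⬝ᵥ T x) ∂μ := by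
  rw [← integral_const_mul]
  congr 1 with x
  rw [hf]
  field_simp

theorem integrable_density_mul_density [MeasurableSpace α] {μ : Measure α}
    (hf : ∀ θ x, f θ x = h x * Real.exp (θ ⬝ᵥ T x) / A θ) {θ θ' : ι → ℝ}
    (hint : Integrable (fun x => h x ^ 2 * Real.exp ((θ + θ') ⬝ᵥ T x)) μ) :
    Integrable (fun x => f θ x * f θ' x) μ := by
  simpa only [density_mul_density hf] using hint.const_mul (A θ * A θ')⁻¹

theorem integral_density_mul_density [MeasurableSpace α] {μ : Measure α}
    (hf : ∀ θ x, f θ x = h x * Real.exp (θ ⬝ᵥ T x) / A θ) {θ θ' : ι → ℝ}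
    (hA : A (θ + θ') ≠ 0) :
    ∫ x, f θ x * f θ' x ∂μ
      = A (θ + θ') / (A θ * A θ') * ∫ x, h x * f (θ + θ') x ∂μ := by
  simp only [density_mul_density hf, integral_const_mul, integral_mul_density hf]
  field_simp

end ExpFamily

theorem stmt_18_general {α : Type*} [MeasurableSpace α] (μ : Measure α)
    (k : ℕ) (T : α → Fin k → ℝ) (h : α → ℝ)
    (A : (Fin k → ℝ) → ℝ)
    (θ₁ θ₂ : Fin k → ℝ)
    (hApos : ∀ θ ∈ ({θ₁, θ₂, 2 • θ₁, 2 • θ₂, θ₁ + θ₂} : Set (Fin k → ℝ)), 0 < A θ)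
    (hsqint : ∀ θ ∈ ({2 • θ₁, 2 • θ₂, θ₁ + θ₂} : Set (Fin k → ℝ)),
      Integrable (fun x => h x ^ 2 * Real.exp (∑ i, θ i * T x i)) μ)
    (f : (Fin k → ℝ) → α → ℝ)
    (hf : ∀ θ x, f θ x = h x * Real.exp (∑ i, θ i * T x i) / A θ)
    (Eh : (Fin k → ℝ) → ℝ) (hEh : ∀ θ, Eh θ = ∫ x, h x * f θ x ∂μ) :
    (∫ x, (f θ₁ x - f θ₂ x) ^ 2 ∂μ)
      = (A (2 • θ₁) / (A θ₁) ^ 2) * Eh (2 • θ₁)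
        + (A (2 • θ₂) / (A θ₂) ^ 2) * Eh (2 • θ₂)
        - 2 * (A (θ₁ + θ₂) / (A θ₁ * A θ₂)) * Eh (θ₁ + θ₂) := by
  have hint : ∀ θ θ', θ + θ' ∈ ({2 • θ₁, 2 • θ₂, θ₁ + θ₂} : Set (Fin k → ℝ)) →
      Integrable (fun x => f θ x * f θ' x) μ := fun θ θ' hθ =>
    integrable_density_mul_density hf (hsqint _ hθ)
  have hA : ∀ θ ∈ ({2 • θ₁, 2 • θ₂, θ₁ + θ₂} : Set (Fin k → ℝ)), A θ ≠ 0 := fun θ hθ =>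
    (hApos θ (by rcases hθ with rfl | rfl | rfl <;> simp)).ne'
  have hdouble : ∀ θ : Fin k → ℝ, θ + θ = 2 • θ := fun θ => (two_smul ℕ θ).symm
  rw [integral_sub_sq (hint θ₁ θ₁ (by simp [hdouble])) (hint θ₂ θ₂ (by simp [hdouble]))
      (hint θ₁ θ₂ (by simp)),
    integral_density_mul_density hf (hA _ (by simp [hdouble])),
    integral_density_mul_density hf (hA _ (by simp [hdouble])),
    integral_density_mul_density hf (hA _ (by simp)), hEh, hEh, hEh, hdouble, hdouble, sq, sq]
  ring

/-- closed form of the ISE between two members of a full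
exponential family `f(x|θ) = h(x) exp(θᵀT(x))/A(θ)`, provided `2θ₁`, `2θ₂`,
and `θ₁+θ₂` are in the natural parameter space:
`D_ISE = ∑_{i=1,2} A(2θᵢ)/A(θᵢ)²·E_{2θᵢ}[h] - 2·A(θ₁+θ₂)/(A(θ₁)A(θ₂))·E_{θ₁+θ₂}[h]`. -/
theorem stmt_18 {α : Type*} [MeasurableSpace α] (μ : Measure α)
    (k : ℕ) (T : α → Fin k → ℝ) (h : α → ℝ) (hh : ∀ x, 0 ≤ h x)
    (A : (Fin k → ℝ) → ℝ)
    (hA : ∀ θ : Fin k → ℝ, A θ = ∫ x, h x * Real.exp (∑ i, θ i * T x i) ∂μ)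
    (θ₁ θ₂ : Fin k → ℝ)
    (hApos : ∀ θ ∈ ({θ₁, θ₂, 2 • θ₁, 2 • θ₂, θ₁ + θ₂} : Set (Fin k → ℝ)), 0 < A θ)
    (hAint : ∀ θ ∈ ({θ₁, θ₂, 2 • θ₁, 2 • θ₂, θ₁ + θ₂} : Set (Fin k → ℝ)),
      Integrable (fun x => h x * Real.exp (∑ i, θ i * T x i)) μ)
    (hsqint : ∀ θ ∈ ({2 • θ₁, 2 • θ₂, θ₁ + θ₂} : Set (Fin k → ℝ)),
      Integrable (fun x => h x ^ 2 * Real.exp (∑ i, θ i * T x i)) μ)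
    (f : (Fin k → ℝ) → α → ℝ)
    (hf : ∀ θ x, f θ x = h x * Real.exp (∑ i, θ i * T x i) / A θ)
    (Eh : (Fin k → ℝ) → ℝ) (hEh : ∀ θ, Eh θ = ∫ x, h x * f θ x ∂μ) :
    (∫ x, (f θ₁ x - f θ₂ x) ^ 2 ∂μ)
      = (A (2 • θ₁) / (A θ₁) ^ 2) * Eh (2 • θ₁)
        + (A (2 • θ₂) / (A θ₂) ^ 2) * Eh (2 • θ₂)
        - 2 * (A (θ₁ + θ₂) / (A θ₁ * A θ₂)) * Eh (θ₁ + θ₂) :=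
  stmt_18_general μ k T h A θ₁ θ₂ hApos hsqint f hf Eh hEh
end
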